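/- arXiv:1902.05043 — 4 statements merged into one kernel-verified Lean document; each statement's English description precedes it below -/
import Mathlib

section
/- Let p ∈ (1,2), n ∈ ℕ, and a_i = (n/i)^{1/p} for i = 1,…,n. Then for all integers 1 ≤ m ≤ n, (1/n)∑_{i=1}^m a_i + (m/n)^{1/2} · ((1/n)∑_{i=m+1}^n a_i^2)^{1/2} ≤ (2/(1-1/p) + (2/p - 1)^{-1/2}) · (m/n)^{1-1/p}. -/
open Finset Real

/-!
Writing `a i = (n / i) ^ (1 / p)`, both normalized sums are Riemann sums of `i ^ (-r)`, with
`r = 1 / p < 1` in the first and `r = 2 / p > 1` in the second. As `x ^ (-r)` is decreasing, they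
are bounded by the integrals, which give `(m / n) ^ (1 - 1 / p) / (1 - 1 / p)` and
`(m / n) ^ (1 - 2 / p) / (2 / p - 1)`; the factor `(m / n) ^ (1 / 2)` turns the square root of the
latter into `(2 / p - 1) ^ (-1 / 2) * (m / n) ^ (1 - 1 / p)`.
-/

theorem sum_Ioc_rpow_neg_le {r : ℝ} (hr0 : 0 ≤ r) (hr1 : r ≠ 1) {a b : ℕ} (ha : 0 < a)
    (hab : a ≤ b) :
    ∑ i ∈ Ioc a b, (i : ℝ) ^ (-r) ≤ ((b : ℝ) ^ (1 - r) - (a : ℝ) ^ (1 - r)) / (1 - r) := by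
  have hanti : AntitoneOn (fun x : ℝ ↦ x ^ (-r)) (Set.Icc a b) := fun x hx y _ hxy ↦
    rpow_le_rpow_of_nonpos (lt_of_lt_of_le (by exact_mod_cast ha) hx.1) hxy (by linarith)
  have hzero : (0 : ℝ) ∉ Set.uIcc (a : ℝ) b := by
    rw [Set.uIcc_of_le (by exact_mod_cast hab)]
    exact fun h ↦ (Nat.cast_pos.mpr ha).not_ge h.1
  have := hanti.sum_le_integral_Ico hab
  rw [integral_rpow (Or.inr ⟨by contrapose! hr1; linarith, hzero⟩)] at this
  rw [← Ico_add_one_add_one_eq_Ioc, ← sum_Ico_add']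
  convert this using 2 <;> ring_nf

theorem sum_Icc_one_rpow_neg_le {s : ℝ} (hs0 : 0 ≤ s) (hs1 : s < 1) (m : ℕ) :
    ∑ i ∈ Icc 1 m, (i : ℝ) ^ (-s) ≤ (m : ℝ) ^ (1 - s) / (1 - s) := by
  rcases Nat.eq_zero_or_pos m with rfl | hm
  · simp [zero_rpow (sub_ne_zero.mpr hs1.ne')]
  have hpos : 0 < 1 - s := by linarith
  -- The term `i = 1` is split off: on `[0, 1]` the function `x ^ (-s)` is not antitone, since
  -- `0 ^ (-s) = 0`.
  rw [← sum_Ioc_add_eq_sum_Icc hm]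
  have := sum_Ioc_rpow_neg_le hs0 hs1.ne one_pos hm
  simp only [Nat.cast_one, one_rpow] at this ⊢
  have : 1 ≤ 1 / (1 - s) := by rw [le_div_iff₀ hpos]; linarith
  calc _ ≤ ((m : ℝ) ^ (1 - s) - 1) / (1 - s) + 1 := by gcongr
    _ ≤ _ := by rw [sub_div]; linarith

theorem sum_Ioc_rpow_neg_le_of_one_lt {q : ℝ} (hq : 1 < q) {m : ℕ} (hm : 0 < m) (n : ℕ) :
    ∑ i ∈ Ioc m n, (i : ℝ) ^ (-q) ≤ (m : ℝ) ^ (1 - q) / (q - 1) := by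
  have hbound : 0 ≤ (m : ℝ) ^ (1 - q) / (q - 1) := div_nonneg (by positivity) (by linarith)
  rcases le_total n m with hnm | hmn
  · simpa [Ioc_eq_empty_of_le hnm] using hbound
  calc _ ≤ ((n : ℝ) ^ (1 - q) - (m : ℝ) ^ (1 - q)) / (1 - q) :=
        sum_Ioc_rpow_neg_le (by linarith) hq.ne' hm hmn
    _ = ((m : ℝ) ^ (1 - q) - (n : ℝ) ^ (1 - q)) / (q - 1) := by
        rw [← neg_sub, ← neg_sub q, neg_div_neg_eq]
    _ ≤ _ := by gcongr; simp only [sub_le_self_iff]; positivity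

theorem one_div_mul_sum_div_rpow {n : ℕ} (hn : 0 < n) (s : ℝ) (t : Finset ℕ) :
    1 / (n : ℝ) * ∑ i ∈ t, ((n : ℝ) / i) ^ s = (n : ℝ) ^ (s - 1) * ∑ i ∈ t, (i : ℝ) ^ (-s) := by
  have hn' : (0 : ℝ) < n := by exact_mod_cast hn
  simp only [mul_sum, div_rpow hn'.le (Nat.cast_nonneg _), rpow_neg (Nat.cast_nonneg _),
    rpow_sub_one hn'.ne']
  exact sum_congr rfl fun i _ ↦ by ring

theorem rpow_sub_one_mul_rpow_one_sub {m n : ℝ} (hm : 0 ≤ m) (hn : 0 ≤ n) (s : ℝ) :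
    n ^ (s - 1) * m ^ (1 - s) = (m / n) ^ (1 - s) := by
  rw [div_rpow hm hn, div_eq_inv_mul, ← rpow_neg hn, neg_sub]

theorem one_div_mul_sum_Icc_div_rpow_le {s : ℝ} (hs0 : 0 ≤ s) (hs1 : s < 1) {m n : ℕ}
    (hn : 0 < n) :
    1 / (n : ℝ) * ∑ i ∈ Icc 1 m, ((n : ℝ) / i) ^ s ≤ ((m : ℝ) / n) ^ (1 - s) / (1 - s) := by
  rw [one_div_mul_sum_div_rpow hn, ← rpow_sub_one_mul_rpow_one_sub (Nat.cast_nonneg m)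
    (Nat.cast_nonneg n), mul_div_assoc]
  gcongr
  exact sum_Icc_one_rpow_neg_le hs0 hs1 m

theorem one_div_mul_sum_Ioc_div_rpow_le {q : ℝ} (hq : 1 < q) {m n : ℕ} (hm : 0 < m)
    (hn : 0 < n) :
    1 / (n : ℝ) * ∑ i ∈ Ioc m n, ((n : ℝ) / i) ^ q ≤ ((m : ℝ) / n) ^ (1 - q) / (q - 1) := by
  rw [one_div_mul_sum_div_rpow hn, ← rpow_sub_one_mul_rpow_one_sub (Nat.cast_nonneg m)
    (Nat.cast_nonneg n), mul_div_assoc]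
  gcongr
  exact sum_Ioc_rpow_neg_le_of_one_lt hq hm n

theorem rpow_half_mul_rpow_div_rpow_half {x : ℝ} (hx : 0 < x) {c : ℝ} (hc : 0 ≤ c) (e : ℝ) :
    x ^ ((1 : ℝ) / 2) * (x ^ e / c) ^ ((1 : ℝ) / 2) = c ^ (-(1 : ℝ) / 2) * x ^ ((1 + e) / 2) := by
  rw [div_rpow (by positivity) hc, ← rpow_mul hx.le, neg_div, rpow_neg hc, mul_div_assoc',
    ← rpow_add hx, div_eq_inv_mul]
  ring_nf

theorem stmt_3 (n : ℕ) (p : ℝ) (hp1 : 1 < p) (hp2 : p < 2)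
    (a : ℕ → ℝ) (ha : ∀ i ∈ Finset.Icc 1 n, a i = ((n : ℝ) / i) ^ (1 / p))
    (m : ℕ) (hm1 : 1 ≤ m) (hmn : m ≤ n) :
    (1 / (n : ℝ)) * ∑ i ∈ Finset.Icc 1 m, a i +
      ((m : ℝ) / n) ^ ((1 : ℝ) / 2) *
        ((1 / (n : ℝ)) * ∑ i ∈ Finset.Icc (m + 1) n, (a i) ^ (2 : ℝ)) ^ ((1 : ℝ) / 2) ≤
      (2 / (1 - 1 / p) + (2 / p - 1) ^ (-(1 : ℝ) / 2)) * ((m : ℝ) / n) ^ (1 - 1 / p) := by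
  have hn : 0 < n := hm1.trans hmn
  have hx : (0 : ℝ) < m / n := by positivity
  have hs1 : 1 / p < 1 := (div_lt_one (by linarith)).mpr hp1
  have hq : 1 < 2 / p := (one_lt_div (by linarith)).mpr hp2
  have hsum₁ : ∑ i ∈ Icc 1 m, a i = ∑ i ∈ Icc 1 m, ((n : ℝ) / i) ^ (1 / p) :=
    sum_congr rfl fun i hi ↦ ha i (Icc_subset_Icc_right hmn hi)
  have hsum₂ : ∑ i ∈ Icc (m + 1) n, a i ^ (2 : ℝ) = ∑ i ∈ Ioc m n, ((n : ℝ) / i) ^ (2 / p) := by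
    rw [Icc_add_one_left_eq_Ioc]
    refine sum_congr rfl fun i hi ↦ ?_
    rw [ha i (Ioc_subset_Icc_self.trans (Icc_subset_Icc_left hm1) hi), ← rpow_mul (by positivity)]
    ring_nf
  have h₁ := one_div_mul_sum_Icc_div_rpow_le (by positivity) hs1 (m := m) hn
  have h₂ := one_div_mul_sum_Ioc_div_rpow_le hq hm1 hn
  calc _ ≤ ((m : ℝ) / n) ^ (1 - 1 / p) / (1 - 1 / p) + ((m : ℝ) / n) ^ ((1 : ℝ) / 2) *
        (((m : ℝ) / n) ^ (1 - 2 / p) / (2 / p - 1)) ^ ((1 : ℝ) / 2) := by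
        rw [hsum₁, hsum₂]
        gcongr
    _ = (1 / (1 - 1 / p) + (2 / p - 1) ^ (-(1 : ℝ) / 2)) * ((m : ℝ) / n) ^ (1 - 1 / p) := by
        rw [rpow_half_mul_rpow_div_rpow_half hx (by linarith)]
        ring_nf
    _ ≤ _ := by
        gcongr
        linarith
end

section
/- Let 1 < p_ε < p, let M be an Orlicz function such that t ↦ M(t)/t^{p_ε} is non-increasing, n ∈ ℕ, and for 1 ≤ ℓ ≤ n define d_i via (M*)^{-1}(ℓ/n) = (1/n)∑_{i=1}^ℓ d_i. Then there exists a constant C depending only on p and p_ε such that for every ℓ = 1,…,n: (ℓ/n)^{1-1/p} · ((1/n)∑_{i=ℓ+1}^n d_i^p)^{1/p} ≤ C · (M*)^{-1}(ℓ/n). -/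
/-!
Write `t = ℓ / n` and `u = M⁻¹(t)`. Since `(M*)⁻¹` is concave through the origin and
`(M*)⁻¹(s) ≤ 2 s / M⁻¹(s)`, each increment satisfies `d_i ≤ 2 / M⁻¹(i / n)`; since
`M(s) / s ^ p_ε` is non-increasing, `M⁻¹(i / n) ≥ u (i / ℓ) ^ (1 / p_ε)`. Hence
`∑_{i > ℓ} d_i ^ p ≤ (2 / u) ^ p ℓ ^ (p / p_ε) ∑_{i > ℓ} i ^ (-p / p_ε) ≲ (2 / u) ^ p ℓ`, so the
left-hand side is `≲ t / u`, and `t / u ≤ (M*)⁻¹(t)` by the duality between `M` and `M*`.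
-/

open Finset

/-- The Legendre (Young) conjugate of an Orlicz function, as a supremum over `t ≥ 0`. -/
noncomputable def orliczConj (M : ℝ → ℝ) (x : ℝ) : ℝ :=
  sSup {y : ℝ | ∃ t : ℝ, 0 ≤ t ∧ y = x * t - M t}

section Orlicz

variable {M : ℝ → ℝ}

theorem pos_of_apply_pos (hM0 : M 0 = 0) {u : ℝ} (hu : 0 ≤ u) (h : 0 < M u) :
    0 < u :=
  hu.lt_of_ne (by rintro rfl; simp [hM0] at h)

theorem orliczConj_le_of_forall (hM0 : M 0 = 0) {x B : ℝ}
    (h : ∀ s, 0 ≤ s → x * s - M s ≤ B) : orliczConj M x ≤ B :=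
  csSup_le ⟨0, 0, le_rfl, by simp [hM0]⟩ fun _ ⟨s, hs, hy⟩ => hy ▸ h s hs

-- An unbounded supremum is `0` in `ℝ`, so a nonzero value certifies boundedness.
theorem sub_le_orliczConj {x s : ℝ} (hx : orliczConj M x ≠ 0) (hs : 0 ≤ s) :
    x * s - M s ≤ orliczConj M x := by
  have hbdd : BddAbove {y : ℝ | ∃ t : ℝ, 0 ≤ t ∧ y = x * t - M t} := by
    by_contra h
    exact hx (Real.sSup_of_not_bddAbove h)
  exact le_csSup hbdd ⟨s, hs, rfl⟩

theorem pos_of_orliczConj_pos (hM0 : M 0 = 0) (hM : ∀ s, 0 ≤ s → 0 ≤ M s) {x : ℝ}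
    (hx : 0 < orliczConj M x) : 0 < x := by
  by_contra! hx0
  have : orliczConj M x ≤ 0 :=
    orliczConj_le_of_forall hM0 fun s hs => by nlinarith [hM s hs]
  linarith

theorem orliczConj_lt_of_lt_of_forall_le (hM0 : M 0 = 0) (hM : ∀ s, 0 ≤ s → 0 ≤ M s)
    {w x B : ℝ} (hw : 0 < orliczConj M w) (hwx : w < x)
    (hB : ∀ s, 0 ≤ s → x * s - M s ≤ B) :
    orliczConj M w < B := by
  have hw0 : 0 < w := pos_of_orliczConj_pos hM0 hM hw
  have hc : 1 < x / w := (one_lt_div hw0).2 hwx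
  -- `(x / w) (w s - M s) ≤ x s - M s` because `x / w ≥ 1` and `M ≥ 0`
  have hle : x / w * orliczConj M w ≤ B := by
    rw [← le_div_iff₀' (by linarith)]
    refine orliczConj_le_of_forall hM0 fun s hs => ?_
    rw [le_div_iff₀' (by linarith)]
    have : x / w * (w * s) = x * s := by field_simp
    nlinarith [hM s hs, hB s hs]
  nlinarith

theorem le_of_orliczConj_eq {va vb a b : ℝ} (hM0 : M 0 = 0) (hM : ∀ s, 0 ≤ s → 0 ≤ M s)
    (hva : orliczConj M va = a) (hvb : orliczConj M vb = b) (ha : 0 < a) (hab : a ≤ b) :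
    va ≤ vb := by
  by_contra! h
  have := orliczConj_lt_of_lt_of_forall_le hM0 hM (hvb ▸ ha.trans_le hab) h
    fun s hs => hva ▸ sub_le_orliczConj (hva ▸ ha.ne') hs
  linarith

theorem div_mul_le_of_orliczConj_eq {va vb a b : ℝ} (hM0 : M 0 = 0)
    (hM : ∀ s, 0 ≤ s → 0 ≤ M s) (hva : orliczConj M va = a) (hvb : orliczConj M vb = b)
    (ha : 0 < a) (hab : a ≤ b) : a / b * vb ≤ va := by
  by_contra! h
  have hb : 0 < b := ha.trans_le hab
  have := orliczConj_lt_of_lt_of_forall_le (B := a) hM0 hM (hva ▸ ha) h fun s hs => by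
    have h1 := hvb ▸ sub_le_orliczConj (hvb ▸ hb.ne') hs
    have h2 : a / b * b = a := by field_simp
    nlinarith [hM s hs, div_pos ha hb]
  linarith [hva]

theorem le_two_mul_div_of_orliczConj_eq {v u t : ℝ} (hv : orliczConj M v = t) (ht : 0 < t)
    (hu : M u = t) (hu0 : 0 < u) : v ≤ 2 * t / u := by
  have := sub_le_orliczConj (hv ▸ ht.ne') hu0.le
  rw [le_div_iff₀ hu0]
  linarith

theorem div_le_of_orliczConj_eq (hM0 : M 0 = 0) (hM : ∀ s, 0 ≤ s → 0 ≤ M s)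
    (hconv : ConvexOn ℝ (Set.Ici 0) M) {v u t : ℝ} (hv : orliczConj M v = t) (ht : 0 < t)
    (hu : M u = t) (hu0 : 0 < u) : t / u ≤ v := by
  by_contra! h
  have hv0 : 0 ≤ v := (pos_of_orliczConj_pos hM0 hM (hv ▸ ht)).le
  suffices orliczConj M v ≤ v * u by rw [hv, ← div_le_iff₀ hu0] at this; linarith
  refine orliczConj_le_of_forall hM0 fun s hs => ?_
  rcases le_or_gt s u with hsu | hus
  · nlinarith [hM s hs]
  · have hslope : M u / u ≤ M s / s := by
      simpa [hM0] using hconv.secant_mono (a := 0) Set.self_mem_Ici hu0.le hs hu0.ne'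
        (hu0.trans hus).ne' hus.le
    rw [hu, div_le_div_iff₀ hu0 (hu0.trans hus)] at hslope
    rw [lt_div_iff₀ hu0] at h
    nlinarith

theorem sub_le_two_mul_sub_div_of_orliczConj_eq {va vb a b ub : ℝ} (hM0 : M 0 = 0)
    (hM : ∀ s, 0 ≤ s → 0 ≤ M s) (hva : orliczConj M va = a) (hvb : orliczConj M vb = b)
    (ha : 0 < a) (hab : a ≤ b) (hub : M ub = b) (hub0 : 0 < ub) :
    vb - va ≤ 2 * (b - a) / ub := by
  have hb : 0 < b := ha.trans_le hab
  have hconc := div_mul_le_of_orliczConj_eq hM0 hM hva hvb ha hab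
  have hvb_le := le_two_mul_div_of_orliczConj_eq hvb hb hub hub0
  calc vb - va ≤ (b - a) / b * vb := by
        have : (b - a) / b * vb = vb - a / b * vb := by field_simp
        linarith
    _ ≤ (b - a) / b * (2 * b / ub) := by
        gcongr
    _ = 2 * (b - a) / ub := by field_simp

theorem mul_rpow_div_le {q : ℝ} (hq : 0 < q) (hM : StrictMonoOn M (Set.Ici 0))
    (hanti : AntitoneOn (fun t => M t / t ^ q) (Set.Ioi 0)) {x y : ℝ} (hx : 0 < x)
    (hy : 0 ≤ y) (hMx : 0 < M x) (hxy : M x ≤ M y) : x * (M y / M x) ^ (1 / q) ≤ y := by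
  have hxy' : x ≤ y := (hM.le_iff_le hx.le hy).1 hxy
  have hy0 : 0 < y := hx.trans_le hxy'
  have hratio : 0 ≤ M y / M x := div_nonneg (hMx.trans_le hxy).le hMx.le
  have hq' := hanti hx hy0 hxy'
  simp only at hq'
  rw [div_le_div_iff₀ (by positivity) (by positivity)] at hq'
  have h1 : x ^ q * (M y / M x) ≤ y ^ q := by
    rw [mul_div_assoc', div_le_iff₀ hMx]
    linarith
  calc x * (M y / M x) ^ (1 / q) = (x ^ q * (M y / M x)) ^ (1 / q) := by
        rw [Real.mul_rpow (by positivity) hratio, ← Real.rpow_mul hx.le,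
          mul_one_div_cancel hq.ne', Real.rpow_one]
    _ ≤ (y ^ q) ^ (1 / q) := by gcongr
    _ = y := by rw [← Real.rpow_mul hy, mul_one_div_cancel hq.ne', Real.rpow_one]

end Orlicz

theorem eq_mul_sub_of_forall_eq_sum {V d : ℕ → ℝ} {n : ℕ} (hn : 0 < n)
    (hd : ∀ k ∈ Icc 1 n, V k = 1 / (n : ℝ) * ∑ j ∈ Icc 1 k, d j) {j : ℕ} (hj : 1 ≤ j)
    (hjn : j + 1 ≤ n) : d (j + 1) = n * (V (j + 1) - V j) := by
  rw [hd (j + 1) (mem_Icc.2 ⟨by omega, hjn⟩), hd j (mem_Icc.2 ⟨hj, by omega⟩),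
    sum_Icc_succ_top (by omega)]
  have : (n : ℝ) ≠ 0 := by positivity
  field_simp
  ring

theorem sum_Icc_rpow_neg_le {a : ℝ} (ha : 1 < a) {l : ℕ} (hl : 0 < l) (n : ℕ) :
    ∑ i ∈ Icc (l + 1) n, (i : ℝ) ^ (-a) ≤ (l : ℝ) ^ (1 - a) / (a - 1) := by
  have hl' : (0 : ℝ) < l := by exact_mod_cast hl
  rcases le_or_gt l n with hln | hnl
  · have hsum : ∑ i ∈ Icc (l + 1) n, (i : ℝ) ^ (-a) =
        ∑ i ∈ Ico l n, ((i + 1 : ℕ) : ℝ) ^ (-a) := by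
      rw [← Ico_add_one_right_eq_Icc, sum_Ico_add' (fun i : ℕ => (i : ℝ) ^ (-a))]
    have hanti : AntitoneOn (fun x : ℝ => x ^ (-a)) (Set.Icc (l : ℝ) n) := fun x hx y _ hxy =>
      Real.rpow_le_rpow_of_nonpos (hl'.trans_le hx.1) hxy (by linarith)
    have hint : ∫ x in (l : ℝ)..n, x ^ (-a) =
        ((l : ℝ) ^ (1 - a) - (n : ℝ) ^ (1 - a)) / (a - 1) := by
      have h0 : (0 : ℝ) ∉ Set.uIcc (l : ℝ) n := by
        rw [Set.uIcc_of_le (by exact_mod_cast hln)]; exact fun h => hl'.not_ge h.1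
      rw [integral_rpow (Or.inr ⟨by linarith, h0⟩), show -a + 1 = 1 - a by ring,
        ← neg_div_neg_eq]
      ring_nf
    have hn : 0 ≤ (n : ℝ) ^ (1 - a) / (a - 1) := by positivity
    calc _ ≤ ∫ x in (l : ℝ)..n, x ^ (-a) := hsum ▸ hanti.sum_le_integral_Ico hln
      _ ≤ _ := by rw [hint, sub_div]; linarith
  · rw [Icc_eq_empty (by omega), sum_empty]
    have : 0 < a - 1 := by linarith
    positivity

theorem sum_rpow_le_of_le_mul_rpow {d : ℕ → ℝ} {c q p : ℝ} (hq : 0 < q) (hqp : q < p)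
    (hc : 0 ≤ c) {ℓ : ℕ} (hℓ : 0 < ℓ) (n : ℕ)
    (hd : ∀ i ∈ Icc (ℓ + 1) n, 0 ≤ d i ∧ d i ≤ c * ((ℓ : ℝ) / i) ^ (1 / q)) :
    ∑ i ∈ Icc (ℓ + 1) n, d i ^ p ≤ c ^ p * (ℓ * (1 / (p / q - 1))) := by
  have hp : 0 < p := hq.trans hqp
  have ha : 1 < p / q := (one_lt_div hq).2 hqp
  have hℓ' : (0 : ℝ) < ℓ := by exact_mod_cast hℓ
  have hterm : ∀ i ∈ Icc (ℓ + 1) n,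
      d i ^ p ≤ c ^ p * ((ℓ : ℝ) ^ (p / q) * (i : ℝ) ^ (-(p / q))) := by
    intro i hi
    have hi0 : (0 : ℝ) < i := Nat.cast_pos.2 (by have := (mem_Icc.1 hi).1; omega)
    calc d i ^ p ≤ (c * ((ℓ : ℝ) / i) ^ (1 / q)) ^ p := by
          gcongr
          exacts [(hd i hi).1, (hd i hi).2]
      _ = _ := by
          rw [Real.mul_rpow hc (by positivity), ← Real.rpow_mul (by positivity),
            Real.div_rpow hℓ'.le hi0.le, Real.rpow_neg hi0.le, div_eq_mul_inv,
            one_div_mul_eq_div]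
  calc ∑ i ∈ Icc (ℓ + 1) n, d i ^ p
      ≤ c ^ p * ((ℓ : ℝ) ^ (p / q) * ∑ i ∈ Icc (ℓ + 1) n, (i : ℝ) ^ (-(p / q))) := by
        rw [mul_sum, mul_sum]; exact sum_le_sum hterm
    _ ≤ c ^ p * ((ℓ : ℝ) ^ (p / q) * ((ℓ : ℝ) ^ (1 - p / q) / (p / q - 1))) := by
        gcongr
        exact sum_Icc_rpow_neg_le ha hℓ n
    _ = c ^ p * (ℓ * (1 / (p / q - 1))) := by
        rw [mul_div_assoc', ← Real.rpow_add hℓ', add_sub_cancel, Real.rpow_one, mul_one_div]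

theorem rpow_one_sub_inv_mul_rpow_inv_le {p t S c K : ℝ} (hp : 0 < p) (ht : 0 < t)
    (hc : 0 ≤ c) (hK : 0 ≤ K) (hS : 0 ≤ S) (hSle : S ≤ c ^ p * (t * K)) :
    t ^ (1 - 1 / p) * S ^ (1 / p) ≤ c * K ^ (1 / p) * t := by
  calc t ^ (1 - 1 / p) * S ^ (1 / p) ≤ t ^ (1 - 1 / p) * (c ^ p * (t * K)) ^ (1 / p) := by
        gcongr
    _ = c * K ^ (1 / p) * (t ^ (1 - 1 / p) * t ^ (1 / p)) := by
        rw [Real.mul_rpow (by positivity) (by positivity), Real.mul_rpow ht.le hK,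
          ← Real.rpow_mul hc, mul_one_div_cancel hp.ne', Real.rpow_one]
        ring
    _ = c * K ^ (1 / p) * t := by
        rw [← Real.rpow_add ht, sub_add_cancel, Real.rpow_one]

theorem increment_nonneg_and_le {M Minv Mstarinv : ℝ → ℝ} {q : ℝ} (hq : 0 < q)
    (hM0 : M 0 = 0) (hM : ∀ s, 0 ≤ s → 0 ≤ M s) (hsm : StrictMonoOn M (Set.Ici 0))
    (hanti : AntitoneOn (fun t => M t / t ^ q) (Set.Ioi 0))
    (hMinv : ∀ t, 0 ≤ t → 0 ≤ Minv t ∧ M (Minv t) = t)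
    (hMstarinv : ∀ t, 0 ≤ t → orliczConj M (Mstarinv t) = t) {n : ℕ} {d : ℕ → ℝ}
    (hd : ∀ k ∈ Icc 1 n, Mstarinv ((k : ℝ) / n) = 1 / (n : ℝ) * ∑ j ∈ Icc 1 k, d j)
    {ℓ i : ℕ} (hℓ : 1 ≤ ℓ) (hi : i ∈ Icc (ℓ + 1) n) :
    0 ≤ d i ∧ d i ≤ 2 / Minv ((ℓ : ℝ) / n) * ((ℓ : ℝ) / i) ^ (1 / q) := by
  obtain ⟨hℓi, hin⟩ := mem_Icc.1 hi
  obtain ⟨j, rfl⟩ : ∃ j, i = j + 1 := ⟨i - 1, by omega⟩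
  have hn : (0 : ℝ) < n := Nat.cast_pos.2 (by omega)
  set t : ℝ := (ℓ : ℝ) / n
  set a : ℝ := (j : ℝ) / n
  set b : ℝ := ((j + 1 : ℕ) : ℝ) / n
  have ht : 0 < t := by positivity
  have ha : 0 < a := div_pos (Nat.cast_pos.2 (by omega)) hn
  have hab : a ≤ b := div_le_div_of_nonneg_right (by push_cast; linarith) hn.le
  have htb : t ≤ b :=
    div_le_div_of_nonneg_right (by exact_mod_cast hℓi.trans' (by omega)) hn.le
  have hba : b - a = 1 / n := by simp only [a, b]; push_cast; ring
  have hdj : d (j + 1) = n * (Mstarinv b - Mstarinv a) :=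
    eq_mul_sub_of_forall_eq_sum (V := fun k => Mstarinv ((k : ℝ) / n)) (by omega) hd
      (by omega) hin
  have hva := hMstarinv a ha.le
  have hvb := hMstarinv b (ha.trans_le hab).le
  obtain ⟨hu_nonneg, hu⟩ := hMinv t ht.le
  obtain ⟨hub_nonneg, hub⟩ := hMinv b (ht.trans_le htb).le
  have hu0 : 0 < Minv t := pos_of_apply_pos hM0 hu_nonneg (by rw [hu]; exact ht)
  have hub0 : 0 < Minv b :=
    pos_of_apply_pos hM0 hub_nonneg (by rw [hub]; exact ht.trans_le htb)
  have hgrowth : Minv t * (b / t) ^ (1 / q) ≤ Minv b := by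
    simpa only [hu, hub] using
      mul_rpow_div_le hq hsm hanti hu0 hub0.le (by rw [hu]; exact ht)
        (by rw [hu, hub]; exact htb)
  refine ⟨hdj ▸ mul_nonneg hn.le (sub_nonneg.2 (le_of_orliczConj_eq hM0 hM hva hvb ha hab)), ?_⟩
  calc d (j + 1) ≤ n * (2 * (b - a) / Minv b) := by
        rw [hdj]
        gcongr
        exact sub_le_two_mul_sub_div_of_orliczConj_eq hM0 hM hva hvb ha hab hub hub0
    _ = 2 / Minv b := by rw [hba]; field_simp
    _ ≤ 2 / (Minv t * (b / t) ^ (1 / q)) := by gcongr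
    _ = 2 / Minv t * ((ℓ : ℝ) / ((j + 1 : ℕ) : ℝ)) ^ (1 / q) := by
        rw [← div_div, div_eq_mul_inv _ ((b / t) ^ (1 / q)), ← Real.inv_rpow (by positivity),
          inv_div]
        congr 2
        simp only [t, b]
        field_simp

theorem stmt_7 (p peps : ℝ) (hpe1 : 1 < peps) (hpe2 : peps < p) :
    ∃ C : ℝ, 0 < C ∧
      ∀ (M : ℝ → ℝ),
        M 0 = 0 →
        ConvexOn ℝ (Set.Ici 0) M →
        (∀ t : ℝ, 0 < t → 0 < M t) →
        StrictMonoOn M (Set.Ici 0) →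
        ContinuousOn M (Set.Ici 0) →
        (∀ y : ℝ, 0 ≤ y → ∃ t : ℝ, 0 ≤ t ∧ M t = y) →
        Filter.Tendsto (fun t => M t / t) (nhdsWithin 0 (Set.Ioi 0)) (nhds 0) →
        Filter.Tendsto (fun t => M t / t) Filter.atTop Filter.atTop →
        AntitoneOn (fun t : ℝ => M t / t ^ peps) (Set.Ioi 0) →
        ∀ (Minv : ℝ → ℝ), (∀ t : ℝ, 0 ≤ t → 0 ≤ Minv t ∧ M (Minv t) = t) →
        ∀ (Mstarinv : ℝ → ℝ),
          (∀ t : ℝ, 0 ≤ t → 0 ≤ Mstarinv t ∧ orliczConj M (Mstarinv t) = t) →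
        ∀ (n : ℕ), 1 ≤ n →
        ∀ (d : ℕ → ℝ),
          (∀ ℓ ∈ Finset.Icc 1 n,
            Mstarinv ((ℓ : ℝ) / n) = (1 / (n : ℝ)) * ∑ i ∈ Finset.Icc 1 ℓ, d i) →
        ∀ ℓ ∈ Finset.Icc 1 n,
          ((ℓ : ℝ) / n) ^ (1 - 1 / p) *
              ((1 / (n : ℝ)) * ∑ i ∈ Finset.Icc (ℓ + 1) n, (d i) ^ p) ^ (1 / p) ≤
            C * Mstarinv ((ℓ : ℝ) / n) := by
  have hp : 0 < p := by linarith
  set K : ℝ := 1 / (p / peps - 1)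
  have hK : 0 < K := one_div_pos.2 (sub_pos.2 ((one_lt_div (by linarith)).2 hpe2))
  refine ⟨2 * K ^ (1 / p), by positivity, ?_⟩
  intro M hM0 hconv hMpos hsm _ _ _ _ hanti Minv hMinv Mstarinv hMstarinv n _ d hd ℓ hℓ
  have hM : ∀ s, 0 ≤ s → 0 ≤ M s := fun s hs =>
    hs.eq_or_lt.elim (fun h => h ▸ hM0.ge) fun h => (hMpos s h).le
  obtain ⟨hℓ1, hℓn⟩ := mem_Icc.1 hℓ
  have hn : (0 : ℝ) < n := Nat.cast_pos.2 (by omega)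
  set t : ℝ := (ℓ : ℝ) / n
  have ht : 0 < t := div_pos (Nat.cast_pos.2 (by omega)) hn
  obtain ⟨hu_nonneg, hu⟩ := hMinv t ht.le
  have hu0 : 0 < Minv t := pos_of_apply_pos hM0 hu_nonneg (by rw [hu]; exact ht)
  have hincr := fun i (hi : i ∈ Icc (ℓ + 1) n) => increment_nonneg_and_le (by linarith) hM0 hM
    hsm hanti hMinv (fun t ht => (hMstarinv t ht).2) hd hℓ1 hi
  have hsum := sum_rpow_le_of_le_mul_rpow (by linarith) hpe2 (by positivity) hℓ1 n hincr
  calc t ^ (1 - 1 / p) * (1 / (n : ℝ) * ∑ i ∈ Icc (ℓ + 1) n, d i ^ p) ^ (1 / p)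
      ≤ 2 / Minv t * K ^ (1 / p) * t := by
        refine rpow_one_sub_inv_mul_rpow_inv_le hp ht (by positivity) hK.le
          (mul_nonneg (by positivity) (sum_nonneg fun i hi => Real.rpow_nonneg (hincr i hi).1 p))
          ?_
        calc _ ≤ 1 / (n : ℝ) * ((2 / Minv t) ^ p * (ℓ * K)) := by gcongr
          _ = _ := by ring
    _ = 2 * K ^ (1 / p) * (t / Minv t) := by ring
    _ ≤ 2 * K ^ (1 / p) * Mstarinv t := by
        gcongr
        exact div_le_of_orliczConj_eq hM0 hM hconv (hMstarinv t ht.le).2 ht hu hu0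
end

section
/- Let p ∈ (1,∞), n ∈ ℕ, and let a_1 ≥ … ≥ a_n > 0 satisfy ∑_{i=k+1}^n a_i/i^{1/p} ≤ C·a_k·k^{1−1/p} for every k = 1,…,n, where C is a constant. Then for every Orlicz function M and every x ∈ ℝ^n, ‖(a_k ((1/k)∑_{i=1}^k (x_i*)^p)^{1/p})_{k=1}^n‖_M ≤ C'·‖(a_k x_k*)_{k=1}^n‖_M, where C' depends only on C. -/
/-!
For non-increasing `x ≥ 0`, the `ℓ^p` norm of `(x_1, …, x_k)` is at most its Lorentz `ℓ^{p,1}` sum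
`∑ x_i w_i` with `w_i = i^{1/p} - (i-1)^{1/p}` (induction on `k`: the increments of the convex
function `t ↦ t^p` grow). Hence the Hardy-type vector is dominated entrywise by `K (a_i x_i)`
for the lower triangular kernel `K k i = a_k w_i / (a_i k^{1/p})`. Its row sums are at most `1`,
as `a` is non-increasing and the `w_i` telescope to `k^{1/p}`; its column sums are at most `1 + C`
by the tail condition on `a` and `w_i ≤ i^{1/p - 1}`. Jensen's inequality for the convex `M`
with `M 0 = 0` turns this into `∑ M (y_k / ((1 + C) ρ)) ≤ ∑ M (z_i / ρ)`, so `C' = 1 + C`.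
-/

open Finset

/-- The Luxemburg norm of the vector `(y 1, …, y n)` with respect to the Orlicz function `M`. -/
noncomputable def luxNorm (M : ℝ → ℝ) (n : ℕ) (y : ℕ → ℝ) : ℝ :=
  sInf {ρ : ℝ | 0 < ρ ∧ ∑ k ∈ Finset.Icc 1 n, M (|y k| / ρ) ≤ 1}

theorem ConvexOn.map_add_sub_map_le_map_add_sub_map {s : Set ℝ} {f : ℝ → ℝ}
    (hf : ConvexOn ℝ s f) {u v d : ℝ} (hv : v ∈ s) (hud : u + d ∈ s) (hvu : v ≤ u)
    (hd : 0 ≤ d) : f (v + d) - f v ≤ f (u + d) - f u := by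
  rcases hd.eq_or_lt with rfl | hd
  · simp
  -- `v + d` and `u` are convex combinations of `v` and `u + d` with swapped weights `1 - θ`, `θ`.
  set θ := d / (u + d - v)
  have hL : 0 < u + d - v := by linarith
  have hθ0 : 0 ≤ θ := by positivity
  have hθ1 : θ ≤ 1 := div_le_one_of_le₀ (by linarith) hL.le
  have h₁ := hf.2 hv hud (sub_nonneg.2 hθ1) hθ0 (sub_add_cancel 1 θ)
  have h₂ := hf.2 hv hud hθ0 (sub_nonneg.2 hθ1) (add_sub_cancel θ 1)
  have e₁ : (1 - θ) • v + θ • (u + d) = v + d := by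
    simp only [smul_eq_mul, θ]; field_simp; ring
  have e₂ : θ • v + (1 - θ) • (u + d) = u := by
    simp only [smul_eq_mul, θ]; field_simp; ring
  rw [e₁] at h₁
  rw [e₂] at h₂
  simp only [smul_eq_mul] at h₁ h₂
  linarith

theorem ConvexOn.map_smul_le {E : Type*} [AddCommGroup E] [Module ℝ E] {s : Set E} {f : E → ℝ}
    (hf : ConvexOn ℝ s f) (h0 : 0 ∈ s) (hf0 : f 0 = 0) {x : E} (hx : x ∈ s) {t : ℝ}
    (ht0 : 0 ≤ t) (ht1 : t ≤ 1) : f (t • x) ≤ t * f x := by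
  simpa [hf0] using hf.2 h0 hx (sub_nonneg.2 ht1) ht0 (sub_add_cancel 1 t)

theorem ConvexOn.map_sum_le_of_sum_le_one {E ι : Type*} [AddCommGroup E] [Module ℝ E]
    {s : Set E} {f : E → ℝ} (hf : ConvexOn ℝ s f) (h0 : 0 ∈ s) (hf0 : f 0 = 0)
    {t : Finset ι} {w : ι → ℝ} {z : ι → E} (hw0 : ∀ i ∈ t, 0 ≤ w i) (hw1 : ∑ i ∈ t, w i ≤ 1)
    (hz : ∀ i ∈ t, z i ∈ s) : f (∑ i ∈ t, w i • z i) ≤ ∑ i ∈ t, w i * f (z i) := by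
  set T := ∑ i ∈ t, w i
  rcases (sum_nonneg hw0 : 0 ≤ T).eq_or_lt with hT | hT
  · have hw : ∀ i ∈ t, w i = 0 := (sum_eq_zero_iff_of_nonneg hw0).1 hT.symm
    simp +contextual [sum_eq_zero, hw, hf0]
  have hwT0 : ∀ i ∈ t, 0 ≤ w i / T := fun i hi => div_nonneg (hw0 i hi) hT.le
  have hwT1 : ∑ i ∈ t, w i / T = 1 := by rw [← sum_div, div_self hT.ne']
  have hsum : ∑ i ∈ t, w i • z i = T • ∑ i ∈ t, (w i / T) • z i := by
    rw [smul_sum]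
    exact sum_congr rfl fun i _ => by rw [smul_smul, mul_div_cancel₀ _ hT.ne']
  calc f (∑ i ∈ t, w i • z i)
      ≤ T * f (∑ i ∈ t, (w i / T) • z i) :=
        hsum ▸ hf.map_smul_le h0 hf0 (hf.1.sum_mem hwT0 hwT1 hz) hT.le hw1
    _ ≤ T * ∑ i ∈ t, (w i / T) • f (z i) :=
        mul_le_mul_of_nonneg_left (hf.map_sum_le hwT0 hwT1 hz) hT.le
    _ = ∑ i ∈ t, w i * f (z i) := by
        rw [mul_sum]
        exact sum_congr rfl fun i _ => by rw [smul_eq_mul, ← mul_assoc, mul_div_cancel₀ _ hT.ne']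

/-- The weights of the Lorentz norm: `‖x‖_{p,1} = ∑ x_i* (i^{1/p} - (i-1)^{1/p})`. -/
noncomputable def lorentzWeight (p : ℝ) (i : ℕ) : ℝ := (i : ℝ) ^ (1 / p) - ((i : ℝ) - 1) ^ (1 / p)

theorem lorentzWeight_nonneg {p : ℝ} (hp : 0 ≤ p) {i : ℕ} (hi : 1 ≤ i) : 0 ≤ lorentzWeight p i :=
  sub_nonneg.2 <| Real.rpow_le_rpow (by simpa using hi) (by linarith) (by positivity)

theorem sum_lorentzWeight {p : ℝ} (hp : p ≠ 0) (k : ℕ) :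
    ∑ i ∈ Icc 1 k, lorentzWeight p i = (k : ℝ) ^ (1 / p) := by
  induction k with
  | zero => simp [hp]
  | succ k ih =>
    rw [sum_Icc_succ_top (by omega), ih, lorentzWeight]
    push_cast
    rw [add_sub_cancel_right]
    ring

theorem lorentzWeight_mul_le {p : ℝ} (hp : 1 ≤ p) {i : ℕ} (hi : 1 ≤ i) :
    lorentzWeight p i * i ≤ (i : ℝ) ^ (1 / p) := by
  have hi0 : (0 : ℝ) < i := by exact_mod_cast hi
  have hi1 : (0 : ℝ) ≤ i - 1 := by simpa using hi
  have hfrac : ((i : ℝ) - 1) / i ≤ (((i : ℝ) - 1) / i) ^ (1 / p) :=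
    Real.self_le_rpow_of_le_one (by positivity) (by rw [div_le_one hi0]; linarith)
      (div_le_one_of_le₀ hp (by linarith))
  have hsplit : ((i : ℝ) - 1) ^ (1 / p) = (i : ℝ) ^ (1 / p) * (((i : ℝ) - 1) / i) ^ (1 / p) := by
    rw [← Real.mul_rpow hi0.le (by positivity), mul_div_cancel₀ _ hi0.ne']
  have := mul_le_mul_of_nonneg_left hfrac (by positivity : (0 : ℝ) ≤ (i : ℝ) ^ (1 / p))
  rw [lorentzWeight, hsplit]
  calc ((i : ℝ) ^ (1 / p) - (i : ℝ) ^ (1 / p) * (((i : ℝ) - 1) / i) ^ (1 / p)) * i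
      ≤ ((i : ℝ) ^ (1 / p) - (i : ℝ) ^ (1 / p) * (((i : ℝ) - 1) / i)) * i := by gcongr
    _ = (i : ℝ) ^ (1 / p) := by field_simp; ring

theorem rpow_one_div_add_rpow_le {p c S k : ℝ} (hp : 1 ≤ p) (hc : 0 ≤ c) (hk : 0 ≤ k)
    (hS : k * c ^ p ≤ S) :
    (S + c ^ p) ^ (1 / p) ≤ S ^ (1 / p) + c * ((k + 1) ^ (1 / p) - k ^ (1 / p)) := by
  have hp0 : 0 < p := by linarith
  have hS0 : 0 ≤ S := le_trans (by positivity) hS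
  have hpow : ∀ {y : ℝ}, 0 ≤ y → (c * y ^ (1 / p)) ^ p = c ^ p * y := fun hy => by
    rw [Real.mul_rpow hc (by positivity), one_div, Real.rpow_inv_rpow hy hp0.ne']
  have hu : (S ^ (1 / p)) ^ p = S := by rw [one_div, Real.rpow_inv_rpow hS0 hp0.ne']
  set u := S ^ (1 / p)
  set v := c * k ^ (1 / p)
  set d := c * ((k + 1) ^ (1 / p) - k ^ (1 / p))
  have hd : 0 ≤ d :=
    mul_nonneg hc (sub_nonneg.2 (Real.rpow_le_rpow hk (by linarith) (by positivity)))
  have hv : v ^ p = c ^ p * k := hpow hk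
  have hvd : (v + d) ^ p = c ^ p * (k + 1) := by
    rw [← hpow (by linarith : 0 ≤ k + 1)]
    exact congrArg (· ^ p) (by ring)
  have hvu : v ≤ u := by
    rw [← Real.rpow_le_rpow_iff (by positivity) (by positivity) hp0, hv, hu]
    linarith
  have hinc := (convexOn_rpow hp).map_add_sub_map_le_map_add_sub_map
    (Set.mem_Ici.2 (by positivity : 0 ≤ v)) (Set.mem_Ici.2 (by positivity : 0 ≤ u + d)) hvu hd
  simp only [hvd, hv, hu] at hinc
  rw [one_div, Real.rpow_inv_le_iff_of_pos (by positivity) (by positivity) hp0]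
  linarith

theorem rpow_sum_rpow_le_sum_mul_lorentzWeight {p : ℝ} (hp : 1 ≤ p) {x : ℕ → ℝ} (k : ℕ)
    (hx : AntitoneOn x (Set.Icc 1 k)) (hx0 : ∀ i ∈ Icc 1 k, 0 ≤ x i) :
    (∑ i ∈ Icc 1 k, x i ^ p) ^ (1 / p) ≤ ∑ i ∈ Icc 1 k, x i * lorentzWeight p i := by
  induction k with
  | zero => simp [(by linarith : p ≠ 0)]
  | succ k ih =>
    have hsub : Icc 1 k ⊆ Icc 1 (k + 1) := Icc_subset_Icc_right k.le_succ
    have hlast : k + 1 ∈ Icc 1 (k + 1) := by simp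
    have hx0' : ∀ i ∈ Icc 1 k, 0 ≤ x i := fun i hi => hx0 i (hsub hi)
    have hk : (k : ℝ) * x (k + 1) ^ p ≤ ∑ i ∈ Icc 1 k, x i ^ p := by
      calc (k : ℝ) * x (k + 1) ^ p = ∑ i ∈ Icc 1 k, x (k + 1) ^ p := by simp
        _ ≤ _ := sum_le_sum fun i hi => Real.rpow_le_rpow (hx0 _ hlast) ?_ (by linarith)
      exact hx (mem_Icc.1 (hsub hi)) (mem_Icc.1 hlast) ((mem_Icc.1 hi).2.trans k.le_succ)
    rw [sum_Icc_succ_top (by omega), sum_Icc_succ_top (by omega)]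
    calc (∑ i ∈ Icc 1 k, x i ^ p + x (k + 1) ^ p) ^ (1 / p)
        ≤ (∑ i ∈ Icc 1 k, x i ^ p) ^ (1 / p) + x (k + 1) * lorentzWeight p (k + 1) := by
          convert rpow_one_div_add_rpow_le hp (hx0 _ hlast) k.cast_nonneg hk using 3
          simp [lorentzWeight]
      _ ≤ _ := by
          gcongr
          exact ih (hx.mono (by simpa using Set.Icc_subset_Icc_right k.le_succ)) hx0'

section Orlicz

variable {M : ℝ → ℝ} {n : ℕ}

theorem exists_pos_sum_le_one_of_convexOn (hM0 : M 0 = 0) (hMconv : ConvexOn ℝ (Set.Ici 0) M)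
    (hMmono : MonotoneOn M (Set.Ici 0)) (y : ℕ → ℝ) :
    ∃ ρ : ℝ, 0 < ρ ∧ ∑ k ∈ Icc 1 n, M (|y k| / ρ) ≤ 1 := by
  set A := ∑ k ∈ Icc 1 n, M |y k|
  have hA : 0 ≤ A := sum_nonneg fun k _ =>
    hM0 ▸ hMmono Set.self_mem_Ici (abs_nonneg (y k)) (abs_nonneg (y k))
  refine ⟨1 + A, by linarith, ?_⟩
  calc ∑ k ∈ Icc 1 n, M (|y k| / (1 + A))
      ≤ ∑ k ∈ Icc 1 n, (1 + A)⁻¹ * M |y k| := sum_le_sum fun k _ => by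
        rw [div_eq_inv_mul]
        exact hMconv.map_smul_le Set.self_mem_Ici hM0 (abs_nonneg (y k)) (by positivity)
          (inv_le_one_of_one_le₀ (by linarith))
    _ = A / (1 + A) := by rw [← mul_sum, inv_mul_eq_div]
    _ ≤ 1 := div_le_one_of_le₀ (by linarith) (by linarith)

theorem luxNorm_le_mul_of_forall {B : ℝ} (hB : 0 < B) {y z : ℕ → ℝ}
    (hz : ∃ ρ : ℝ, 0 < ρ ∧ ∑ k ∈ Icc 1 n, M (|z k| / ρ) ≤ 1)
    (hyz : ∀ ρ : ℝ, 0 < ρ → ∑ k ∈ Icc 1 n, M (|z k| / ρ) ≤ 1 →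
      ∑ k ∈ Icc 1 n, M (|y k| / (B * ρ)) ≤ 1) :
    luxNorm M n y ≤ B * luxNorm M n z := by
  rw [← div_le_iff₀' hB]
  refine le_csInf hz fun ρ ⟨hρ, hρz⟩ => (div_le_iff₀' hB).2 ?_
  exact csInf_le ⟨0, fun _ h => h.1.le⟩ ⟨by positivity, hyz ρ hρ hρz⟩

theorem sum_map_le_sum_map_of_le_lowerTriangular (hM0 : M 0 = 0) (hMconv : ConvexOn ℝ (Set.Ici 0) M)
    (hMmono : MonotoneOn M (Set.Ici 0)) {K : ℕ → ℕ → ℝ}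
    (hK : ∀ k ∈ Icc 1 n, ∀ i ∈ Icc 1 k, 0 ≤ K k i)
    (hrow : ∀ k ∈ Icc 1 n, ∑ i ∈ Icc 1 k, K k i ≤ 1)
    (hcol : ∀ i ∈ Icc 1 n, ∑ k ∈ Icc i n, K k i ≤ 1) {u v : ℕ → ℝ}
    (hu : ∀ k ∈ Icc 1 n, 0 ≤ u k) (hv : ∀ i ∈ Icc 1 n, 0 ≤ v i)
    (huv : ∀ k ∈ Icc 1 n, u k ≤ ∑ i ∈ Icc 1 k, K k i * v i) :
    ∑ k ∈ Icc 1 n, M (u k) ≤ ∑ i ∈ Icc 1 n, M (v i) := by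
  have hMnonneg : ∀ t, 0 ≤ t → 0 ≤ M t := fun t ht =>
    hM0 ▸ hMmono Set.self_mem_Ici ht ht
  have hvk : ∀ k ∈ Icc 1 n, ∀ i ∈ Icc 1 k, 0 ≤ v i := fun k hk i hi =>
    hv i (Icc_subset_Icc_right (mem_Icc.1 hk).2 hi)
  calc ∑ k ∈ Icc 1 n, M (u k)
      ≤ ∑ k ∈ Icc 1 n, ∑ i ∈ Icc 1 k, K k i * M (v i) := sum_le_sum fun k hk =>
        (hMmono (hu k hk) (sum_nonneg fun i hi => mul_nonneg (hK k hk i hi) (hvk k hk i hi))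
          (huv k hk)).trans
        (hMconv.map_sum_le_of_sum_le_one Set.self_mem_Ici hM0 (hK k hk) (hrow k hk)
          (hvk k hk))
    _ = ∑ i ∈ Icc 1 n, (∑ k ∈ Icc i n, K k i) * M (v i) := by
        simp_rw [sum_mul]
        exact sum_comm' fun k i => by simp only [mem_Icc]; omega
    _ ≤ ∑ i ∈ Icc 1 n, M (v i) := sum_le_sum fun i hi =>
        mul_le_of_le_one_left (hMnonneg _ (hv i hi)) (hcol i hi)

theorem luxNorm_le_mul_of_le_lowerTriangular (hM0 : M 0 = 0)
    (hMconv : ConvexOn ℝ (Set.Ici 0) M) (hMmono : MonotoneOn M (Set.Ici 0)) {K : ℕ → ℕ → ℝ}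
    {B : ℝ} (hB : 1 ≤ B) (hK : ∀ k ∈ Icc 1 n, ∀ i ∈ Icc 1 k, 0 ≤ K k i)
    (hrow : ∀ k ∈ Icc 1 n, ∑ i ∈ Icc 1 k, K k i ≤ 1)
    (hcol : ∀ i ∈ Icc 1 n, ∑ k ∈ Icc i n, K k i ≤ B) {y z : ℕ → ℝ}
    (hyz : ∀ k ∈ Icc 1 n, |y k| ≤ ∑ i ∈ Icc 1 k, K k i * |z i|) :
    luxNorm M n y ≤ B * luxNorm M n z := by
  have hB0 : 0 < B := by linarith
  refine luxNorm_le_mul_of_forall hB0 (exists_pos_sum_le_one_of_convexOn hM0 hMconv hMmono z)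
    fun ρ hρ hρz => le_trans ?_ hρz
  refine sum_map_le_sum_map_of_le_lowerTriangular hM0 hMconv hMmono (K := fun k i => K k i / B)
    (fun k hk i hi => div_nonneg (hK k hk i hi) hB0.le) (fun k hk => ?_) (fun i hi => ?_)
    (fun k _ => by positivity) (fun i _ => by positivity) (fun k hk => ?_)
  · rw [← sum_div]
    exact (div_le_div_of_nonneg_right (hrow k hk) hB0.le).trans
      (div_le_one_of_le₀ hB hB0.le)
  · rw [← sum_div]
    exact div_le_one_of_le₀ (hcol i hi) hB0.le
  · calc |y k| / (B * ρ) ≤ (∑ i ∈ Icc 1 k, K k i * |z i|) / (B * ρ) := by gcongr; exact hyz k hk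
      _ = ∑ i ∈ Icc 1 k, K k i / B * (|z i| / ρ) := by
        rw [sum_div]
        exact sum_congr rfl fun i _ => by field_simp

end Orlicz

noncomputable def hardyKernel (p : ℝ) (a : ℕ → ℝ) (k i : ℕ) : ℝ :=
  a k * lorentzWeight p i / (a i * (k : ℝ) ^ (1 / p))

section HardyKernel

variable {p : ℝ} {a : ℕ → ℝ}

theorem hardyKernel_nonneg (hp : 0 ≤ p) {k i : ℕ} (hak : 0 ≤ a k) (hai : 0 ≤ a i) (hi : 1 ≤ i) :
    0 ≤ hardyKernel p a k i :=
  div_nonneg (mul_nonneg hak (lorentzWeight_nonneg hp hi))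
    (mul_nonneg hai (Real.rpow_nonneg k.cast_nonneg _))

theorem sum_hardyKernel_le_one (hp : 1 ≤ p) {k : ℕ} (ha : AntitoneOn a (Set.Icc 1 k))
    (ha0 : ∀ i ∈ Icc 1 k, 0 < a i) : ∑ i ∈ Icc 1 k, hardyKernel p a k i ≤ 1 := by
  calc ∑ i ∈ Icc 1 k, hardyKernel p a k i
      ≤ ∑ i ∈ Icc 1 k, lorentzWeight p i / (k : ℝ) ^ (1 / p) := sum_le_sum fun i hi => by
        obtain ⟨hi1, hik⟩ := mem_Icc.1 hi
        have hak : a k ≤ a i := ha ⟨hi1, hik⟩ ⟨hi1.trans hik, le_rfl⟩ hik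
        have hw0 := lorentzWeight_nonneg (p := p) (by linarith) hi1
        have hkr : (0 : ℝ) < (k : ℝ) ^ (1 / p) :=
          Real.rpow_pos_of_pos (by exact_mod_cast hi1.trans hik) _
        rw [hardyKernel, div_le_div_iff₀ (mul_pos (ha0 i hi) hkr) hkr]
        nlinarith [mul_le_mul_of_nonneg_right hak (mul_nonneg hw0 hkr.le)]
    _ = (k : ℝ) ^ (1 / p) / (k : ℝ) ^ (1 / p) := by rw [← sum_div, sum_lorentzWeight (by linarith)]
    _ ≤ 1 := div_self_le_one _

theorem sum_hardyKernel_le_one_add (hp : 1 ≤ p) {C : ℝ} (hC : 0 ≤ C) {n i : ℕ} (hi : 1 ≤ i)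
    (hin : i ≤ n) (hai : 0 < a i)
    (htail : ∑ k ∈ Icc (i + 1) n, a k / (k : ℝ) ^ (1 / p) ≤ C * a i * (i : ℝ) ^ (1 - 1 / p)) :
    ∑ k ∈ Icc i n, hardyKernel p a k i ≤ 1 + C := by
  have hi0 : (0 : ℝ) < i := by exact_mod_cast hi
  have hw0 := lorentzWeight_nonneg (p := p) (by linarith) hi
  have hw := lorentzWeight_mul_le hp hi
  have hr : (0 : ℝ) < (i : ℝ) ^ (1 / p) := by positivity
  have hw₁ : lorentzWeight p i / (i : ℝ) ^ (1 / p) ≤ 1 := by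
    rw [div_le_one hr]
    exact le_trans (le_mul_of_one_le_right hw0 (by exact_mod_cast hi)) hw
  have hw₂ : lorentzWeight p i * (i : ℝ) ^ (1 - 1 / p) ≤ 1 := by
    rw [Real.rpow_sub hi0, Real.rpow_one, mul_div_assoc', div_le_one hr]
    exact hw
  calc ∑ k ∈ Icc i n, hardyKernel p a k i
      = lorentzWeight p i / a i * (a i / (i : ℝ) ^ (1 / p) +
          ∑ k ∈ Icc (i + 1) n, a k / (k : ℝ) ^ (1 / p)) := by
        rw [← insert_Icc_add_one_left_eq_Icc hin, sum_insert (by simp), mul_add, mul_sum]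
        congr 1
        · rw [hardyKernel]; ring
        · exact sum_congr rfl fun k _ => by rw [hardyKernel]; ring
    _ ≤ lorentzWeight p i / a i * (a i / (i : ℝ) ^ (1 / p) + C * a i * (i : ℝ) ^ (1 - 1 / p)) := by
        gcongr
    _ = lorentzWeight p i / (i : ℝ) ^ (1 / p) +
          C * (lorentzWeight p i * (i : ℝ) ^ (1 - 1 / p)) := by
        field_simp
    _ ≤ 1 + C := by nlinarith

theorem abs_mul_rpow_mean_le_sum_hardyKernel (hp : 1 ≤ p) {x : ℕ → ℝ} {k : ℕ}
    (hx : AntitoneOn x (Set.Icc 1 k)) (hx0 : ∀ i ∈ Icc 1 k, 0 ≤ x i) (hak : 0 ≤ a k)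
    (ha0 : ∀ i ∈ Icc 1 k, 0 < a i) :
    |a k * ((1 / (k : ℝ)) * ∑ i ∈ Icc 1 k, x i ^ p) ^ (1 / p)| ≤
      ∑ i ∈ Icc 1 k, hardyKernel p a k i * |a i * x i| := by
  have hS : 0 ≤ ∑ i ∈ Icc 1 k, x i ^ p := sum_nonneg fun i hi => Real.rpow_nonneg (hx0 i hi) p
  rw [abs_of_nonneg (by positivity)]
  calc a k * ((1 / (k : ℝ)) * ∑ i ∈ Icc 1 k, x i ^ p) ^ (1 / p)
      = a k / (k : ℝ) ^ (1 / p) * (∑ i ∈ Icc 1 k, x i ^ p) ^ (1 / p) := by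
        rw [Real.mul_rpow (by positivity) hS, Real.div_rpow zero_le_one k.cast_nonneg,
          Real.one_rpow]
        ring
    _ ≤ a k / (k : ℝ) ^ (1 / p) * ∑ i ∈ Icc 1 k, x i * lorentzWeight p i := by
        gcongr
        exact rpow_sum_rpow_le_sum_mul_lorentzWeight hp k hx hx0
    _ = ∑ i ∈ Icc 1 k, hardyKernel p a k i * |a i * x i| := by
        rw [mul_sum]
        refine sum_congr rfl fun i hi => ?_
        have hai := (ha0 i hi).ne'
        rw [abs_of_nonneg (mul_nonneg (ha0 i hi).le (hx0 i hi)), hardyKernel]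
        field_simp

end HardyKernel

theorem stmt_11 (C : ℝ) (hC : 0 < C) :
    ∃ C' : ℝ, 0 < C' ∧
      ∀ (p : ℝ), 1 < p →
      ∀ (n : ℕ) (a : ℕ → ℝ),
        (∀ i j, 1 ≤ i → i ≤ j → j ≤ n → a j ≤ a i) →
        (∀ i ∈ Finset.Icc 1 n, 0 < a i) →
        (∀ k, 1 ≤ k → k ≤ n →
          ∑ i ∈ Finset.Icc (k + 1) n, a i / (i : ℝ) ^ (1 / p) ≤
            C * a k * (k : ℝ) ^ (1 - 1 / p)) →
      ∀ (M : ℝ → ℝ),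
        M 0 = 0 → ConvexOn ℝ (Set.Ici 0) M → (∀ t : ℝ, 0 < t → 0 < M t) →
        StrictMonoOn M (Set.Ici 0) → (∀ y : ℝ, 0 ≤ y → ∃ t : ℝ, 0 ≤ t ∧ M t = y) →
      ∀ (x xs : ℕ → ℝ),
        (∀ i j, 1 ≤ i → i ≤ j → j ≤ n → xs j ≤ xs i) →
        (∃ σ : Equiv.Perm ℕ, (∀ i ∈ Finset.Icc 1 n, σ i ∈ Finset.Icc 1 n) ∧
          ∀ i ∈ Finset.Icc 1 n, xs i = |x (σ i)|) →
        luxNorm M n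
            (fun k => a k * ((1 / (k : ℝ)) * ∑ i ∈ Finset.Icc 1 k, (xs i) ^ p) ^ (1 / p)) ≤
          C' * luxNorm M n (fun k => a k * xs k) := by
  refine ⟨1 + C, by linarith, fun p hp n a ha_anti ha_pos ha_tail M hM0 hMconv _ hMmono _ x xs
    hxs_anti hxs => ?_⟩
  obtain ⟨σ, -, hxs⟩ := hxs
  have ha_antiOn : AntitoneOn a (Set.Icc 1 n) := fun i hi j hj hij => ha_anti i j hi.1 hij hj.2
  have hxs_antiOn : AntitoneOn xs (Set.Icc 1 n) := fun i hi j hj hij => hxs_anti i j hi.1 hij hj.2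
  have hxs0 : ∀ i ∈ Icc 1 n, 0 ≤ xs i := fun i hi => hxs i hi ▸ abs_nonneg _
  have hsub : ∀ k ∈ Icc 1 n, Icc 1 k ⊆ Icc 1 n := fun k hk => Icc_subset_Icc_right (mem_Icc.1 hk).2
  have hsub' : ∀ k ∈ Icc 1 n, Set.Icc 1 k ⊆ Set.Icc 1 n := fun k hk =>
    Set.Icc_subset_Icc_right (mem_Icc.1 hk).2
  refine luxNorm_le_mul_of_le_lowerTriangular hM0 hMconv hMmono.monotoneOn
    (K := hardyKernel p a) (by linarith) ?_ ?_ ?_ ?_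
  · exact fun k hk i hi => hardyKernel_nonneg (by linarith) (ha_pos k hk).le
      (ha_pos i (hsub k hk hi)).le (mem_Icc.1 hi).1
  · exact fun k hk => sum_hardyKernel_le_one hp.le (ha_antiOn.mono (hsub' k hk))
      fun i hi => ha_pos i (hsub k hk hi)
  · exact fun i hi => sum_hardyKernel_le_one_add hp.le hC.le (mem_Icc.1 hi).1 (mem_Icc.1 hi).2
      (ha_pos i hi) (ha_tail i (mem_Icc.1 hi).1 (mem_Icc.1 hi).2)
  · exact fun k hk => abs_mul_rpow_mean_le_sum_hardyKernel hp.le (hxs_antiOn.mono (hsub' k hk))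
      (fun i hi => hxs0 i (hsub k hk hi)) (ha_pos k hk).le fun i hi => ha_pos i (hsub k hk hi)
end

section
/- Let n ∈ ℕ, and for k = 1,…,n let c^k ∈ ℝ^n be the vector with first ⌊n/k⌋ coordinates equal to a_k and remaining coordinates 0, where a_1 ≥ … ≥ a_n > 0. Then for every x ∈ ℝ^n and every k, the average (1/n!)∑_{π ∈ S_n} (∑_{i=1}^n |x_i c^k_{π(i)}|^2)^{1/2} is at least a constant multiple of a_k · (1/k)∑_{i=1}^k x_i*, with an absolute constant independent of n, k, x, a. -/
/-!
For a uniformly random `π`, the vector `c^k ∘ π` is supported on a uniformly random set of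
`m = ⌊n/k⌋` coordinates, and its norm against `x` is at least `a_k |x_i|` for every coordinate `i`
it hits. Let `N` be the number of hits among the `k` coordinates carrying `x*_1, …, x*_k`. The
inequality `(3 - N) · ∑_{hits} y ≤ 2 · max_{hits} y` (for `y ≥ 0`) is linear in the indicators of
single and paired hits, so its average over `S_n` only involves `P(i hit) = m/n` and
`P(i and j hit) = m(m-1)/(n(n-1))`, which follow from the `2`-transitivity of `S_n`.
Since `km ≤ n ≤ 2km`, the resulting bound is at least `(1/(4k)) ∑_{i ≤ k} a_k x*_i`.
-/

open Finset

theorem three_sub_card_mul_sum_le {ι : Type*} {S : Finset ι} {y : ι → ℝ} {g : ℝ}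
    (hy : ∀ t ∈ S, 0 ≤ y t) (hyg : ∀ t ∈ S, y t ≤ g) (hg : 0 ≤ g) :
    (3 - #S) * ∑ t ∈ S, y t ≤ 2 * g := by
  have hsum : ∑ t ∈ S, y t ≤ #S * g := by simpa using sum_le_card_nsmul S y g hyg
  rcases le_or_gt (#S : ℝ) 3 with hS | hS
  · -- `N (3 - N) ≤ 2` for every integer `N`
    have hN : ((#S : ℝ) - 1) * (#S - 2) ≥ 0 := by
      rcases Nat.lt_or_ge #S 2 with h | h
      · interval_cases #S <;> norm_num
      · have : (2 : ℝ) ≤ #S := by exact_mod_cast h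
        nlinarith
    nlinarith [mul_le_mul_of_nonneg_left hsum (sub_nonneg.2 hS)]
  · nlinarith [sum_nonneg hy]

theorem three_sub_card_filter_mul_sum_filter {ι : Type*} [DecidableEq ι] (F : Finset ι)
    (p : ι → Prop) [DecidablePred p] (y : ι → ℝ) :
    (3 - #(F.filter p)) * ∑ t ∈ F.filter p, y t
      = ∑ t ∈ F, y t * (2 * (if p t then 1 else 0)
          - ∑ s ∈ F.erase t, (if p t ∧ p s then 1 else 0)) := by
  rw [mul_comm, sum_mul, sum_filter]
  refine sum_congr rfl fun t ht => ?_
  by_cases hpt : p t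
  · have hmem : t ∈ F.filter p := mem_filter.2 ⟨ht, hpt⟩
    have hpos : 1 ≤ #(F.filter p) := card_pos.2 ⟨t, hmem⟩
    simp only [hpt, true_and, if_true, sum_boole, filter_erase, card_erase_of_mem hmem,
      Nat.cast_sub hpos]
    ring
  · simp [hpt]

namespace Equiv.Perm

variable {α M : Type*} [Fintype α] [DecidableEq α] [AddCommMonoid M]

theorem sum_comp_eq_of_injective {ι : Type*} [Finite ι] (f : (ι → α) → M) {e e' : ι → α}
    (he : Function.Injective e) (he' : Function.Injective e') :
    ∑ π : Perm α, f (π ∘ e) = ∑ π : Perm α, f (π ∘ e') := by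
  obtain ⟨τ, hτ⟩ := exists_extending_pair e e' he he'
  refine Fintype.sum_equiv (Equiv.mulRight τ⁻¹) _ _ fun π => congrArg f ?_
  ext a
  simp [← hτ a]

theorem card_nsmul_sum_apply (f : α → M) (i : α) :
    Fintype.card α • ∑ π : Perm α, f (π i) = (Fintype.card α).factorial • ∑ v, f v := by
  have hconst (j : α) : ∑ π : Perm α, f (π j) = ∑ π : Perm α, f (π i) :=
    sum_comp_eq_of_injective (ι := Unit) (fun u => f (u ())) (e := fun _ => j)
      (e' := fun _ => i) (fun _ _ _ => rfl) (fun _ _ _ => rfl)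
  calc Fintype.card α • ∑ π : Perm α, f (π i) = ∑ j, ∑ π : Perm α, f (π j) := by
        simp [hconst]
    _ = ∑ π : Perm α, ∑ v, f v := by
        rw [Finset.sum_comm]
        exact Fintype.sum_congr _ _ fun π => Equiv.sum_comp π f
    _ = _ := by simp [Fintype.card_perm]

theorem card_mul_pred_nsmul_sum_apply_apply (f : α → α → M) {i j : α} (hij : i ≠ j) :
    (Fintype.card α * (Fintype.card α - 1)) • ∑ π : Perm α, f (π i) (π j)
      = (Fintype.card α).factorial • ∑ p ∈ univ.offDiag, f p.1 p.2 := by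
  have hconst : ∀ p ∈ (univ : Finset α).offDiag,
      ∑ π : Perm α, f (π p.1) (π p.2) = ∑ π : Perm α, f (π i) (π j) := by
    intro p hp
    exact sum_comp_eq_of_injective (fun u => f (u 0) (u 1))
      (injective_pair_iff_ne.2 (mem_offDiag.1 hp).2.2) (injective_pair_iff_ne.2 hij)
  have hoff (π : Perm α) : ∑ p ∈ univ.offDiag, f (π p.1) (π p.2) = ∑ p ∈ univ.offDiag, f p.1 p.2 :=
    Finset.sum_equiv (π.prodCongr π) (fun p => by simp [π.injective.ne_iff]) (fun _ _ => rfl)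
  calc (Fintype.card α * (Fintype.card α - 1)) • ∑ π : Perm α, f (π i) (π j)
      = ∑ p ∈ univ.offDiag, ∑ π : Perm α, f (π p.1) (π p.2) := by
        rw [sum_congr rfl hconst, sum_const, offDiag_card, card_univ, Nat.mul_sub_one]
    _ = ∑ π : Perm α, ∑ p ∈ univ.offDiag, f p.1 p.2 := by
        rw [Finset.sum_comm]
        exact Fintype.sum_congr _ _ hoff
    _ = _ := by simp [Fintype.card_perm]

theorem sum_ite_apply_mem (A : Finset α) (i : α) :
    ∑ π : Perm α, (if π i ∈ A then 1 else 0 : ℝ)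
      = (Fintype.card α).factorial * #A / Fintype.card α := by
  have : Nonempty α := ⟨i⟩
  have hcard : (Fintype.card α : ℝ) ≠ 0 := by exact_mod_cast Fintype.card_ne_zero
  have hA : ∑ v, (if v ∈ A then 1 else 0 : ℝ) = #A := by simp
  have h := card_nsmul_sum_apply (fun v => (if v ∈ A then 1 else 0 : ℝ)) i
  rw [nsmul_eq_mul, nsmul_eq_mul, hA] at h
  rw [eq_div_iff hcard, mul_comm, h]

theorem sum_ite_apply_mem_and_apply_mem (A : Finset α) {i j : α} (hij : i ≠ j) :
    ∑ π : Perm α, (if π i ∈ A ∧ π j ∈ A then 1 else 0 : ℝ)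
      = (Fintype.card α).factorial * (#A * (#A - 1))
        / (Fintype.card α * (Fintype.card α - 1)) := by
  have h2 : 2 ≤ Fintype.card α := Fintype.one_lt_card_iff.2 ⟨i, j, hij⟩
  have hcard : (Fintype.card α : ℝ) * (Fintype.card α - 1) ≠ 0 := by
    have : (2 : ℝ) ≤ Fintype.card α := by exact_mod_cast h2
    exact mul_ne_zero (by linarith) (by linarith)
  have h := card_mul_pred_nsmul_sum_apply_apply
    (fun v w => (if v ∈ A ∧ w ∈ A then 1 else 0 : ℝ)) hij
  have hoff : ∑ p ∈ univ.offDiag, (if p.1 ∈ A ∧ p.2 ∈ A then 1 else 0 : ℝ)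
      = #A * (#A - 1) := by
    rw [sum_boole, show univ.offDiag.filter (fun p : α × α => p.1 ∈ A ∧ p.2 ∈ A) = A.offDiag by
      ext p; simp; tauto, offDiag_card, Nat.cast_sub (Nat.le_mul_self _)]
    push_cast; ring
  rw [nsmul_eq_mul, nsmul_eq_mul, hoff, Nat.cast_mul, Nat.cast_sub (by omega : 1 ≤ Fintype.card α),
    Nat.cast_one] at h
  rw [eq_div_iff hcard, mul_comm, h]

theorem factorial_mul_mul_sum_le_two_mul_sum (A F : Finset α) {y : α → ℝ} {g : Perm α → ℝ}
    (hy : ∀ t ∈ F, 0 ≤ y t) (hg : ∀ π, 0 ≤ g π) (hyg : ∀ π : Perm α, ∀ t ∈ F, π t ∈ A → y t ≤ g π) :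
    (Fintype.card α).factorial * (2 * #A / Fintype.card α
        - (#F - 1) * (#A * (#A - 1)) / (Fintype.card α * (Fintype.card α - 1)))
      * ∑ t ∈ F, y t ≤ 2 * ∑ π, g π := by
  have hpair (t : α) (ht : t ∈ F) :
      ∑ s ∈ F.erase t, ∑ π : Perm α, (if π t ∈ A ∧ π s ∈ A then 1 else 0 : ℝ)
        = (#F - 1) * ((Fintype.card α).factorial * (#A * (#A - 1))
          / (Fintype.card α * (Fintype.card α - 1))) := by
    rw [sum_congr rfl fun s hs => sum_ite_apply_mem_and_apply_mem A (mem_erase.1 hs).1.symm,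
      sum_const, card_erase_of_mem ht, nsmul_eq_mul, Nat.cast_sub (card_pos.2 ⟨t, ht⟩),
      Nat.cast_one]
  calc _ = ∑ π : Perm α, (3 - #(F.filter (π · ∈ A))) * ∑ t ∈ F.filter (π · ∈ A), y t := by
        simp_rw [three_sub_card_filter_mul_sum_filter]
        rw [sum_comm, mul_sum]
        refine sum_congr rfl fun t ht => ?_
        rw [← mul_sum, sum_sub_distrib, ← mul_sum, sum_comm, sum_ite_apply_mem, hpair t ht]
        ring
    _ ≤ ∑ π : Perm α, 2 * g π := sum_le_sum fun π _ =>
        three_sub_card_mul_sum_le (fun t ht => hy t (mem_filter.1 ht).1)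
          (fun t ht => hyg π t (mem_filter.1 ht).1 (mem_filter.1 ht).2) (hg π)
    _ = 2 * ∑ π, g π := (mul_sum _ _ _).symm

end Equiv.Perm

theorem one_div_two_mul_le_two_mul_div_sub {n k : ℕ} (hk : 1 ≤ k) (hkn : k ≤ n) :
    1 / (2 * k : ℝ) ≤ 2 * ((n / k : ℕ) : ℝ) / n
      - (k - 1) * ((n / k : ℕ) * ((n / k : ℕ) - 1)) / (n * (n - 1)) := by
  have hm : 1 ≤ n / k := (Nat.one_le_div_iff hk).2 hkn
  have hkm : k * (n / k) ≤ n := Nat.mul_div_le n k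
  have hn : n ≤ 2 * (k * (n / k)) := by
    have := Nat.div_add_mod n k
    have := Nat.mod_lt n hk
    have := Nat.le_mul_of_pos_right k hm
    omega
  obtain rfl | hk2 := eq_or_lt_of_le hk
  · have : (0 : ℝ) < n := by exact_mod_cast hkn
    simp only [Nat.div_one, Nat.cast_one, sub_self, zero_mul, zero_div, sub_zero]
    rw [mul_div_assoc, div_self this.ne']
    norm_num
  set m := n / k
  have hK : (2 : ℝ) ≤ k := by exact_mod_cast hk2
  have hM : (1 : ℝ) ≤ m := by exact_mod_cast hm
  have hKM : (k : ℝ) * m ≤ n := by exact_mod_cast hkm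
  have hN : (n : ℝ) ≤ 2 * (k * m) := by exact_mod_cast hn
  have hN2 : (2 : ℝ) ≤ n := by nlinarith
  have hpair : (k - 1) * (m * (m - 1)) / (n * (n - 1)) ≤ (m : ℝ) / n := by
    have h : ((k : ℝ) - 1) * (m - 1) ≤ n - 1 := by nlinarith
    rw [div_le_div_iff₀ (by nlinarith) (by linarith)]
    calc ((k : ℝ) - 1) * (m * (m - 1)) * n = (m * n) * ((k - 1) * (m - 1)) := by ring
      _ ≤ (m * n) * (n - 1) := mul_le_mul_of_nonneg_left h (by positivity)
      _ = m * (n * (n - 1)) := by ring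
  have hsingle : 1 / (2 * k : ℝ) ≤ m / n := by
    rw [div_le_div_iff₀ (by linarith) (by linarith)]
    linarith
  linarith [show 2 * (m : ℝ) / n = m / n + m / n by ring]

theorem abs_le_rpow_sum_abs_rpow_two {ι : Type*} [Fintype ι] (f : ι → ℝ) (i : ι) :
    |f i| ≤ (∑ j, |f j| ^ (2 : ℝ)) ^ (1 / 2 : ℝ) := by
  simp_rw [← Real.sqrt_eq_rpow, Real.rpow_two]
  rw [Real.le_sqrt (abs_nonneg _) (sum_nonneg fun j _ => sq_nonneg _)]
  exact single_le_sum (f := fun j => |f j| ^ 2) (fun j _ => sq_nonneg _) (mem_univ i)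

theorem stmt_16 :
    ∃ c : ℝ, 0 < c ∧
      ∀ (n : ℕ) (a : ℕ → ℝ),
        (∀ i j, 1 ≤ i → i ≤ j → j ≤ n → a j ≤ a i) →
        (∀ i ∈ Finset.Icc 1 n, 0 < a i) →
      ∀ (x xs : Fin n → ℝ),
        -- `xs` is the non-increasing rearrangement of `(|x i|)`
        Antitone xs →
        (∃ σ : Equiv.Perm (Fin n), ∀ i, xs i = |x (σ i)|) →
      ∀ (k : ℕ), 1 ≤ k → k ≤ n →
        c * (a k * ((1 / (k : ℝ)) *
              ∑ i ∈ Finset.univ.filter (fun i : Fin n => (i : ℕ) < k), xs i)) ≤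
          (1 / (n.factorial : ℝ)) * ∑ π : Equiv.Perm (Fin n),
            (∑ i, |x i * (if ((π i : ℕ)) < n / k then a k else 0)| ^ (2 : ℝ))
              ^ ((1 : ℝ) / 2) := by
  refine ⟨1 / 4, by norm_num, ?_⟩
  rintro n a - hpos x xs - ⟨σ, hσ⟩ k hk hkn
  set ν : Equiv.Perm (Fin n) → ℝ := fun π =>
    (∑ i, |x i * (if ((π i : ℕ)) < n / k then a k else 0)| ^ (2 : ℝ)) ^ ((1 : ℝ) / 2)
  have hak : 0 < a k := hpos k (mem_Icc.2 ⟨hk, hkn⟩)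
  have hxs (t : Fin n) : 0 ≤ xs t := (hσ t).symm ▸ abs_nonneg _
  have hν (π : Equiv.Perm (Fin n)) : 0 ≤ ν π :=
    Real.rpow_nonneg (sum_nonneg fun i _ => Real.rpow_nonneg (abs_nonneg _) _) _
  -- `ρ ↦ ρ * σ⁻¹` moves the rearrangement from `x` onto the permutations
  have hbound : ∀ ρ : Equiv.Perm (Fin n), ∀ t ∈ univ.filter (fun i : Fin n => (i : ℕ) < k),
      ρ t ∈ univ.filter (fun v : Fin n => (v : ℕ) < n / k) → a k * xs t ≤ ν (ρ * σ⁻¹) := by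
    intro ρ t _ hρt
    have hρσ : (ρ * σ⁻¹) (σ t) = ρ t := by simp
    calc a k * xs t = |x (σ t) * (if (((ρ * σ⁻¹) (σ t) : Fin n) : ℕ) < n / k then a k else 0)| := by
          rw [hρσ, if_pos (mem_filter.1 hρt).2, hσ, abs_mul, abs_of_pos hak, mul_comm]
      _ ≤ ν (ρ * σ⁻¹) := abs_le_rpow_sum_abs_rpow_two
          (fun i => x i * (if (((ρ * σ⁻¹) i : Fin n) : ℕ) < n / k then a k else 0)) (σ t)
  have hsum : ∑ ρ, ν (ρ * σ⁻¹) = ∑ π, ν π := Equiv.sum_comp (Equiv.mulRight σ⁻¹) ν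
  have hmain := Equiv.Perm.factorial_mul_mul_sum_le_two_mul_sum _ _ (g := fun ρ => ν (ρ * σ⁻¹))
    (fun t _ => mul_nonneg hak.le (hxs t)) (fun ρ => hν _) hbound
  rw [Fintype.card_fin, Fin.card_filter_val_lt, Fin.card_filter_val_lt,
    min_eq_right (Nat.div_le_self n k), min_eq_right hkn, ← mul_sum, hsum] at hmain
  set S := ∑ t ∈ univ.filter (fun i : Fin n => (i : ℕ) < k), xs t
  have hS : 0 ≤ a k * S := mul_nonneg hak.le (sum_nonneg fun t _ => hxs t)
  have hfac : (0 : ℝ) < n.factorial := by exact_mod_cast n.factorial_pos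
  have hweight := mul_le_mul_of_nonneg_left (one_div_two_mul_le_two_mul_div_sub hk hkn)
    (mul_nonneg hfac.le hS)
  rw [one_div_mul_eq_div (n.factorial : ℝ), le_div_iff₀ hfac]
  linarith [show 1 / 4 * (a k * (1 / (k : ℝ) * S)) * n.factorial
    = 1 / 2 * (n.factorial * (a k * S) * (1 / (2 * k : ℝ))) by ring]
end
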